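/- The determinant of the numerically stable (scaled) extended matrix B_ex equals the determinant of A up to sign: |det B_ex| = |det A|. Here B_ex is the (3N−2)×(3N−2) real matrix acting on the concatenated variable vector (x_1,…,x_N, l_2,…,l_N, r_2,…,r_N) whose rows, in order, are the linear forms E_1,…,E_N, L_2,…,L_N, R_2,…,R_N given by E_k = l_k + x_k + exp(−β·(t_{k+1} − t_k))·r_{k+1} (with the l_k term read as 0 for k = 1 and the r_{k+1} term read as 0 for k = N), L_2 = l_2 − exp(−β·(t_2 − t_1))·x_1, L_{k+1} = l_{k+1} − exp(−β·(t_{k+1} − t_k))·(x_k + l_k) for 2 ≤ k ≤ N−1, R_N = r_N − x_N, and R_k = r_k − x_k − exp(−β·(t_{k+1} − t_k))·r_{k+1} for 2 ≤ k ≤ N−1. -/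

import Mathlib

/-!
Write `e_k = exp (-β (t_{k+1} - t_k))`. Since `t` is increasing, `A i j = e_j ⋯ e_{i-1}` for
`j ≤ i`, so the left and right partial sums `l_k = ∑_{j < k} A k j x_j`,
`r_k = ∑_{j ≥ k} A k j x_j` of `A x` satisfy exactly the recursions encoded by the rows `L`, `R`,
and `E_k` evaluates to `(A x)_k` on them. Hence the column operation that substitutes these
partial sums for the unknowns `l, r` makes `B_ex` block upper triangular with diagonal blocks `A`
and the `(l, r)`-block of `B_ex`. That block is the direct sum of a unit lower bidiagonal and a
unit upper bidiagonal matrix, so `det B_ex = det A`.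
-/

open Matrix

theorem Real.exp_neg_mul_sub_mul_exp_neg_mul_sub (β a b c : ℝ) :
    Real.exp (-β * (b - a)) * Real.exp (-β * (c - b)) = Real.exp (-β * (c - a)) := by
  rw [← Real.exp_add]
  ring_nf

namespace Matrix

variable {l m n R : Type*} [Fintype m]

theorem mul_apply_eq_mulVec [NonUnitalNonAssocSemiring R] (M : Matrix l m R) (T : Matrix m n R)
    (p : l) (q : n) : (M * T) p q = (M *ᵥ fun r => T r q) p := rfl

theorem apply_eq_mulVec_single_one [DecidableEq m] [NonAssocSemiring R] (M : Matrix l m R)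
    (p : l) (q : m) : M p q = (M *ᵥ Pi.single q 1) p := by
  rw [mulVec_single_one, col_apply]

theorem det_eq_det_toBlocks₁₁_mul_det_toBlocks₂₂_of_mul_fromBlocks [Fintype n]
    [DecidableEq m] [DecidableEq n] [CommRing R] (M : Matrix (m ⊕ n) (m ⊕ n) R) (C : Matrix n m R)
    (hC : (M * fromBlocks 1 0 C 1).toBlocks₂₁ = 0) :
    M.det = (M * fromBlocks 1 0 C 1).toBlocks₁₁.det * M.toBlocks₂₂.det := by
  have hT : (fromBlocks 1 0 C 1 : Matrix (m ⊕ n) (m ⊕ n) R).det = 1 := by simp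
  have h₂₂ : (M * fromBlocks 1 0 C 1).toBlocks₂₂ = M.toBlocks₂₂ := by
    conv_lhs => rw [← fromBlocks_toBlocks M, fromBlocks_multiply]
    simp
  set MT := M * fromBlocks 1 0 C 1
  calc M.det = MT.det := by rw [det_mul, hT, mul_one]
    _ = (fromBlocks MT.toBlocks₁₁ MT.toBlocks₁₂ 0 M.toBlocks₂₂).det := by
      rw [← hC, ← h₂₂, fromBlocks_toBlocks]
    _ = _ := det_fromBlocks_zero₂₁ _ _ _

end Matrix

namespace ScaledExtendedMatrix

def HasRowsE (N : ℕ) (t : ℕ → ℝ) (β : ℝ)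
    (B : Matrix (Fin N ⊕ (Fin (N - 1) ⊕ Fin (N - 1))) (Fin N ⊕ (Fin (N - 1) ⊕ Fin (N - 1))) ℝ) :
    Prop :=
  ∀ (y : Fin N ⊕ (Fin (N - 1) ⊕ Fin (N - 1)) → ℝ) (i : Fin N), B.mulVec y (Sum.inl i) =
    (if h : 1 ≤ i.val then y (Sum.inr (Sum.inl ⟨i.val - 1, Nat.sub_lt_sub_right h i.isLt⟩))
      else 0)
    + y (Sum.inl i)
    + (if h : i.val + 1 < N then
        Real.exp (-β * (t (i.val + 1) - t i.val)) *
          y (Sum.inr (Sum.inr ⟨i.val, Nat.lt_sub_of_add_lt h⟩))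
      else 0)

def HasRowsL (N : ℕ) (t : ℕ → ℝ) (β : ℝ)
    (B : Matrix (Fin N ⊕ (Fin (N - 1) ⊕ Fin (N - 1))) (Fin N ⊕ (Fin (N - 1) ⊕ Fin (N - 1))) ℝ) :
    Prop :=
  ∀ (y : Fin N ⊕ (Fin (N - 1) ⊕ Fin (N - 1)) → ℝ) (k : Fin (N - 1)),
    B.mulVec y (Sum.inr (Sum.inl k)) = y (Sum.inr (Sum.inl k))
      - Real.exp (-β * (t (k.val + 1) - t k.val)) * (y (Sum.inl ⟨k.val, by omega⟩)
        + (if 1 ≤ k.val then y (Sum.inr (Sum.inl ⟨k.val - 1, by omega⟩)) else 0))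

def HasRowsR (N : ℕ) (t : ℕ → ℝ) (β : ℝ)
    (B : Matrix (Fin N ⊕ (Fin (N - 1) ⊕ Fin (N - 1))) (Fin N ⊕ (Fin (N - 1) ⊕ Fin (N - 1))) ℝ) :
    Prop :=
  ∀ (y : Fin N ⊕ (Fin (N - 1) ⊕ Fin (N - 1)) → ℝ) (k : Fin (N - 1)),
    B.mulVec y (Sum.inr (Sum.inr k)) =
      y (Sum.inr (Sum.inr k)) - y (Sum.inl ⟨k.val + 1, by omega⟩)
      - (if h : k.val + 2 < N then
          Real.exp (-β * (t (k.val + 2) - t (k.val + 1))) *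
            y (Sum.inr (Sum.inr ⟨k.val + 1, Nat.lt_sub_of_add_lt h⟩))
        else 0)

/-- Rows `inl k` and `inr k` compute the partial sums `l_{k+2}` and `r_{k+2}` (1-based, as in
`B_ex`) from `x`. -/
noncomputable def partialSumMatrix (N : ℕ) (t : ℕ → ℝ) (β : ℝ) :
    Matrix (Fin (N - 1) ⊕ Fin (N - 1)) (Fin N) ℝ :=
  of fun a j => match a with
    | Sum.inl k => if j.val ≤ k.val then Real.exp (-β * (t (k.val + 1) - t j.val)) else 0
    | Sum.inr k => if k.val + 1 ≤ j.val then Real.exp (-β * (t j.val - t (k.val + 1))) else 0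

variable {N : ℕ} {t : ℕ → ℝ} {β : ℝ}
  {B : Matrix (Fin N ⊕ (Fin (N - 1) ⊕ Fin (N - 1))) (Fin N ⊕ (Fin (N - 1) ⊕ Fin (N - 1))) ℝ}

theorem mul_fromBlocks_partialSumMatrix_toBlocks₁₁ (ht : ∀ i j, i < j → j < N → t i < t j)
    (hE : HasRowsE N t β B) :
    (B * fromBlocks 1 0 (partialSumMatrix N t β) 1).toBlocks₁₁ =
      of fun i j => Real.exp (-β * |t i.val - t j.val|) := by
  ext i j
  rw [toBlocks₁₁, of_apply, of_apply, mul_apply_eq_mulVec, hE]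
  simp only [fromBlocks_apply₁₁, fromBlocks_apply₂₁, one_apply, partialSumMatrix, of_apply,
    Fin.ext_iff]
  rcases lt_trichotomy (j : ℕ) i with hji | hij | hij <;>
    simp (disch := omega) only [dif_pos, if_pos, if_neg, mul_zero, dite_eq_ite, ite_self,
      add_zero, zero_add]
  · rw [Nat.sub_add_cancel (by omega), abs_of_pos (sub_pos.2 (ht _ _ hji i.isLt))]
  · rw [hij, sub_self, abs_zero, mul_zero, Real.exp_zero]
  · rw [Real.exp_neg_mul_sub_mul_exp_neg_mul_sub, abs_sub_comm,
      abs_of_pos (sub_pos.2 (ht _ _ hij j.isLt))]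

theorem mul_fromBlocks_partialSumMatrix_toBlocks₂₁ (hL : HasRowsL N t β B)
    (hR : HasRowsR N t β B) :
    (B * fromBlocks 1 0 (partialSumMatrix N t β) 1).toBlocks₂₁ = 0 := by
  ext (k | k) j <;> rw [toBlocks₂₁, of_apply, mul_apply_eq_mulVec, Matrix.zero_apply]
  · rw [hL]
    simp only [fromBlocks_apply₁₁, fromBlocks_apply₂₁, one_apply, partialSumMatrix, of_apply,
      Fin.ext_iff]
    rcases lt_trichotomy (j : ℕ) k with hjk | hjk | hjk <;>
      simp (disch := omega) only [if_pos, if_neg, ite_self, add_zero, zero_add, mul_zero,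
        mul_one, sub_self]
    · rw [Nat.sub_add_cancel (by omega), mul_comm (Real.exp _),
        Real.exp_neg_mul_sub_mul_exp_neg_mul_sub, sub_self]
    · rw [hjk, sub_self]
  · rw [hR]
    simp only [fromBlocks_apply₁₁, fromBlocks_apply₂₁, one_apply, partialSumMatrix, of_apply,
      Fin.ext_iff]
    rcases lt_trichotomy (j : ℕ) (k + 1) with hjk | hjk | hjk <;>
      simp (disch := omega) only [dif_pos, if_pos, if_neg, dite_eq_ite, ite_self, sub_zero,
        mul_zero, sub_self, Real.exp_neg_mul_sub_mul_exp_neg_mul_sub]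
    rw [hjk, sub_self, mul_zero, Real.exp_zero, sub_self]

theorem det_toBlocks₂₂ (hL : HasRowsL N t β B) (hR : HasRowsR N t β B) :
    B.toBlocks₂₂.det = 1 := by
  have h₁₂ : B.toBlocks₂₂.toBlocks₁₂ = 0 := by
    ext k m
    show B (.inr (.inl k)) (.inr (.inr m)) = 0
    rw [apply_eq_mulVec_single_one B, hL]
    simp
  have hl : B.toBlocks₂₂.toBlocks₁₁.IsLowerTriangular := fun k m (hkm : (k : ℕ) < m) => by
    show B (.inr (.inl k)) (.inr (.inl m)) = 0
    rw [apply_eq_mulVec_single_one B, hL]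
    simp [Fin.ext_iff, hkm.ne, show (k : ℕ) - 1 ≠ m by omega]
  have hr : B.toBlocks₂₂.toBlocks₂₂.IsUpperTriangular := fun k m (hkm : (m : ℕ) < k) => by
    show B (.inr (.inr k)) (.inr (.inr m)) = 0
    rw [apply_eq_mulVec_single_one B, hR]
    simp [Fin.ext_iff, hkm.ne', show (k : ℕ) + 1 ≠ m by omega]
  have hl₁ : ∀ k, B (.inr (.inl k)) (.inr (.inl k)) = 1 := fun k => by
    rw [apply_eq_mulVec_single_one B, hL]
    simp +contextual [Fin.ext_iff, Nat.one_le_iff_ne_zero, Nat.sub_one_ne_self]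
  have hr₁ : ∀ k, B (.inr (.inr k)) (.inr (.inr k)) = 1 := fun k => by
    rw [apply_eq_mulVec_single_one B, hR]
    simp [Fin.ext_iff]
  rw [← fromBlocks_toBlocks B.toBlocks₂₂, h₁₂, det_fromBlocks_zero₁₂,
    det_of_isLowerTriangular _ hl, det_of_isUpperTriangular hr]
  simp [toBlocks₂₂, toBlocks₁₁, hl₁, hr₁]

end ScaledExtendedMatrix

/-- `|det B_ex| = |det A|` for the numerically stable (scaled) extended
matrix of the single-exponential kernel `A i j = exp(-β |t_i - t_j|)` (`t` written
0-based and strictly increasing). `B_ex` acts on the concatenated variable vector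
`(x_1,…,x_N, l_2,…,l_N, r_2,…,r_N)`, encoded by the index type
`Fin N ⊕ (Fin (N-1) ⊕ Fin (N-1))`: `Sum.inl i` holds `x_{i+1}`,
`Sum.inr (Sum.inl k)` holds `l_{k+2}`, and `Sum.inr (Sum.inr k)` holds `r_{k+2}`
(1-based names).  Its rows are the linear forms `E_1,…,E_N, L_2,…,L_N, R_2,…,R_N`
of the statement, specified through the action of `B_ex` on every vector `y`. -/
theorem stmt_14 (N : ℕ) (t : ℕ → ℝ)
    (ht : ∀ i j, i < j → j < N → t i < t j)
    (β : ℝ)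
    (A : Matrix (Fin N) (Fin N) ℝ)
    (hA : ∀ i j : Fin N, A i j = Real.exp (-β * |t i.val - t j.val|))
    (Bex : Matrix (Fin N ⊕ (Fin (N - 1) ⊕ Fin (N - 1)))
                  (Fin N ⊕ (Fin (N - 1) ⊕ Fin (N - 1))) ℝ)
    (hEx : ∀ y : (Fin N ⊕ (Fin (N - 1) ⊕ Fin (N - 1))) → ℝ,
      -- rows E_k :  l_k + x_k + exp(-β(t_{k+1} - t_k))·r_{k+1}
      -- (the l-term read as 0 for the first row, the r-term as 0 for the last row)
      (∀ i : Fin N, Bex.mulVec y (Sum.inl i) =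
        (if h : 1 ≤ i.val then
            y (Sum.inr (Sum.inl ⟨i.val - 1, by have := i.isLt; omega⟩)) else 0)
        + y (Sum.inl i)
        + (if h : i.val + 1 < N then
            Real.exp (-β * (t (i.val + 1) - t i.val)) *
              y (Sum.inr (Sum.inr ⟨i.val, by omega⟩)) else 0))
      ∧
      -- rows L_{k+2} :  l_{k+2} - exp(-β(t_{k+2} - t_{k+1}))·(x_{k+1} + l_{k+1})
      -- (the l_{k+1}-term read as 0 when k = 0, giving L_2 = l_2 - exp(-β(t_2 - t_1))·x_1)
      (∀ k : Fin (N - 1), Bex.mulVec y (Sum.inr (Sum.inl k)) =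
        y (Sum.inr (Sum.inl k))
        - Real.exp (-β * (t (k.val + 1) - t k.val)) *
            (y (Sum.inl ⟨k.val, by have := k.isLt; omega⟩)
              + (if h : 1 ≤ k.val then
                  y (Sum.inr (Sum.inl ⟨k.val - 1, by have := k.isLt; omega⟩)) else 0)))
      ∧
      -- rows R_{k+2} :  r_{k+2} - x_{k+2} - exp(-β(t_{k+3} - t_{k+2}))·r_{k+3}
      -- (the r_{k+3}-term read as 0 for the last row, giving R_N = r_N - x_N)
      (∀ k : Fin (N - 1), Bex.mulVec y (Sum.inr (Sum.inr k)) =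
        y (Sum.inr (Sum.inr k))
        - y (Sum.inl ⟨k.val + 1, by have := k.isLt; omega⟩)
        - (if h : k.val + 2 < N then
            Real.exp (-β * (t (k.val + 2) - t (k.val + 1))) *
              y (Sum.inr (Sum.inr ⟨k.val + 1, by omega⟩)) else 0))) :
    |Bex.det| = |A.det| := by
  obtain ⟨hE, hLR⟩ := forall_and.mp hEx
  obtain ⟨hL, hR⟩ := forall_and.mp hLR
  have hA' : A = of fun i j => Real.exp (-β * |t i.val - t j.val|) := ext hA
  rw [det_eq_det_toBlocks₁₁_mul_det_toBlocks₂₂_of_mul_fromBlocks Bex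
      (ScaledExtendedMatrix.partialSumMatrix N t β)
      (ScaledExtendedMatrix.mul_fromBlocks_partialSumMatrix_toBlocks₂₁ hL hR),
    ScaledExtendedMatrix.mul_fromBlocks_partialSumMatrix_toBlocks₁₁ ht hE,
    ScaledExtendedMatrix.det_toBlocks₂₂ hL hR, mul_one, hA']
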